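/- arXiv:2405.18829 — 3 statements merged into one kernel-verified Lean document; each statement's English description precedes it below -/
import Mathlib

section
/- Let h₀ > 0. There exists a unique global C¹ solution θ : ℝ → ℝ of the ODE θ'(x) = √(sin²θ(x) + 2h₀(1 - cos θ(x))) with θ(0) = π, and it satisfies 0 < θ(x) < 2π for all x ∈ ℝ, θ is strictly increasing, lim_{x→-∞} θ(x) = 0, and lim_{x→+∞} θ(x) = 2π. -/
/-!
Writing θ = π + 2 arctan s turns the equation into s' = √(h₀ + (1 + h₀) s²), which is solved by
s = √(h₀ / (1 + h₀)) sinh (√(1 + h₀) x). The resulting explicit solution `kink` visibly lies in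
(0, 2π), increases, and tends to 0 and 2π. Uniqueness is Picard–Lindelöf: since
2 (1 - cos y) = 4 sin² (y / 2), the right-hand side is the Euclidean length of
(sin y, 2 √h₀ sin (y / 2)), hence globally Lipschitz.
-/

open Real Filter

lemma Real.tendsto_sinh_atTop : Tendsto sinh atTop atTop :=
  tendsto_atTop_mono' _ (eventually_ge_atTop 0 |>.mono fun _ hx => self_le_sinh_iff.2 hx)
    tendsto_id

lemma Real.tendsto_sinh_atBot : Tendsto sinh atBot atBot :=
  tendsto_atBot_mono' _ (eventually_le_atBot 0 |>.mono fun _ hx => sinh_le_self_iff.2 hx)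
    tendsto_id

theorem LipschitzWith.sqrt_sq_add_sq {α : Type*} [PseudoEMetricSpace α] {Ku Kw : NNReal}
    {u w : α → ℝ} (hu : LipschitzWith Ku u) (hw : LipschitzWith Kw w) :
    LipschitzWith (Ku + Kw) fun y => √(u y ^ 2 + w y ^ 2) := by
  simp_rw [← Complex.norm_add_mul_I]
  have := (Complex.isometry_ofReal.lipschitz.comp hu).add
    ((lipschitzWith_smul Complex.I).comp (Complex.isometry_ofReal.lipschitz.comp hw))
  simpa [Function.comp_def, mul_comm] using lipschitzWith_one_norm.comp this

noncomputable def kinkSpeed (h₀ y : ℝ) : ℝ := √(sin y ^ 2 + 2 * h₀ * (1 - cos y))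

noncomputable def kink (h₀ x : ℝ) : ℝ := π + 2 * arctan (√(h₀ / (1 + h₀)) * sinh (√(1 + h₀) * x))

variable {h₀ : ℝ}

lemma kinkSpeed_eq_sqrt_sq_add_sq (hh : 0 ≤ h₀) (y : ℝ) :
    kinkSpeed h₀ y = √(sin y ^ 2 + (2 * √h₀ * sin (y / 2)) ^ 2) := by
  have hcos : cos y = 1 - 2 * sin (y / 2) ^ 2 := by
    have h := cos_sq (y / 2)
    rw [mul_div_cancel₀ y two_ne_zero] at h
    linarith [cos_sq_add_sin_sq (y / 2)]
  rw [kinkSpeed, hcos, mul_pow, mul_pow, sq_sqrt hh]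
  ring_nf

lemma lipschitzWith_kinkSpeed (hh : 0 ≤ h₀) :
    LipschitzWith (1 + (√h₀).toNNReal) (kinkSpeed h₀) := by
  have hw : LipschitzWith (√h₀).toNNReal fun y => 2 * √h₀ * sin (y / 2) := by
    refine LipschitzWith.of_dist_le_mul fun a b => ?_
    have := abs_sin_sub_sin_le (a / 2) (b / 2)
    rw [← sub_div, abs_div, abs_two] at this
    rw [Real.coe_toNNReal _ (sqrt_nonneg _), dist_eq, dist_eq, ← mul_sub, abs_mul,
      abs_of_nonneg (by positivity)]
    nlinarith [sqrt_nonneg h₀]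
  simpa only [funext (kinkSpeed_eq_sqrt_sq_add_sq hh)] using
    LipschitzWith.sqrt_sq_add_sq lipschitzWith_sin hw

lemma kinkSpeed_pi_add_two_mul_arctan (hh : 0 ≤ h₀) (s : ℝ) :
    kinkSpeed h₀ (π + 2 * arctan s) = 2 * √(h₀ + (1 + h₀) * s ^ 2) / (1 + s ^ 2) := by
  have hcos : cos (arctan s) ^ 2 * (1 + s ^ 2) = 1 := by
    rw [cos_sq_arctan]; field_simp
  have hsin : sin (arctan s) = s * cos (arctan s) := by
    rw [sin_arctan, cos_arctan, mul_one_div]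
  have key : sin (π + 2 * arctan s) ^ 2 + 2 * h₀ * (1 - cos (π + 2 * arctan s)) =
      (2 * √(h₀ + (1 + h₀) * s ^ 2) / (1 + s ^ 2)) ^ 2 := by
    rw [add_comm π, sin_add_pi, cos_add_pi, sin_two_mul, cos_two_mul, hsin, div_pow, mul_pow,
      sq_sqrt (by positivity)]
    field_simp
    linear_combination
      (2 * s ^ 2 * (cos (arctan s) ^ 2 * (1 + s ^ 2) + 1) + 2 * h₀ * (1 + s ^ 2)) * hcos
  rw [kinkSpeed, key, sqrt_sq (by positivity)]

lemma hasDerivAt_kink (hh : 0 ≤ h₀) (x : ℝ) :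
    HasDerivAt (kink h₀) (kinkSpeed h₀ (kink h₀ x)) x := by
  have hs : HasDerivAt (fun x => √(h₀ / (1 + h₀)) * sinh (√(1 + h₀) * x))
      (√h₀ * cosh (√(1 + h₀) * x)) x := by
    refine ((((hasDerivAt_id x).const_mul _).sinh).const_mul _).congr_deriv ?_
    rw [id, mul_one, sqrt_div hh]
    field_simp
  have hroot : √(h₀ + (1 + h₀) * (√(h₀ / (1 + h₀)) * sinh (√(1 + h₀) * x)) ^ 2) =
      √h₀ * cosh (√(1 + h₀) * x) := by
    rw [← sqrt_sq (cosh_pos _).le, ← sqrt_mul hh, mul_pow, sq_sqrt (by positivity), cosh_sq']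
    congr 1
    field_simp
  refine ((hs.arctan.const_mul 2).const_add π).congr_deriv ?_
  rw [kink, kinkSpeed_pi_add_two_mul_arctan hh, hroot]
  ring

lemma contDiff_kink {n : WithTop ℕ∞} : ContDiff ℝ n (kink h₀) :=
  contDiff_const.add (contDiff_const.mul (contDiff_arctan.comp
    (contDiff_const.mul (contDiff_sinh.comp (contDiff_const.mul contDiff_id)))))

lemma kink_zero (h₀ : ℝ) : kink h₀ 0 = π := by
  simp [kink]

lemma kink_mem_Ioo (h₀ x : ℝ) : 0 < kink h₀ x ∧ kink h₀ x < 2 * π := by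
  have := neg_pi_div_two_lt_arctan (√(h₀ / (1 + h₀)) * sinh (√(1 + h₀) * x))
  have := arctan_lt_pi_div_two (√(h₀ / (1 + h₀)) * sinh (√(1 + h₀) * x))
  constructor <;> unfold kink <;> linarith

lemma strictMono_kink (h : 0 < h₀) : StrictMono (kink h₀) := by
  have ha : 0 < √(h₀ / (1 + h₀)) := by positivity
  have hk : 0 < √(1 + h₀) := by positivity
  intro x y hxy
  simp only [kink, add_lt_add_iff_left, mul_lt_mul_iff_right₀ two_pos, arctan_lt_arctan_iff,
    mul_lt_mul_iff_right₀ ha, sinh_lt_sinh, mul_lt_mul_iff_right₀ hk, hxy]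

lemma tendsto_kink_atTop (h : 0 < h₀) : Tendsto (kink h₀) atTop (nhds (2 * π)) := by
  have hs : Tendsto (fun x => √(h₀ / (1 + h₀)) * sinh (√(1 + h₀) * x)) atTop atTop :=
    (tendsto_sinh_atTop.comp (tendsto_id.const_mul_atTop (by positivity))).const_mul_atTop
      (by positivity)
  rw [show 2 * π = π + 2 * (π / 2) by ring]
  exact (((tendsto_arctan_atTop.mono_right nhdsWithin_le_nhds).comp hs).const_mul 2).const_add π

lemma tendsto_kink_atBot (h : 0 < h₀) : Tendsto (kink h₀) atBot (nhds 0) := by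
  have hs : Tendsto (fun x => √(h₀ / (1 + h₀)) * sinh (√(1 + h₀) * x)) atBot atBot :=
    (tendsto_sinh_atBot.comp (tendsto_id.const_mul_atBot (by positivity))).const_mul_atBot
      (by positivity)
  rw [show (0 : ℝ) = π + 2 * -(π / 2) by ring]
  exact (((tendsto_arctan_atBot.mono_right nhdsWithin_le_nhds).comp hs).const_mul 2).const_add π

lemma eq_kink_of_hasDerivAt (hh : 0 ≤ h₀) {θ : ℝ → ℝ}
    (hθ : ∀ x, HasDerivAt θ (kinkSpeed h₀ (θ x)) x) (h0 : θ 0 = π) : θ = kink h₀ :=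
  ODE_solution_unique_univ (v := fun _ => kinkSpeed h₀) (s := fun _ => Set.univ) (t₀ := 0)
    (fun _ => (lipschitzWith_kinkSpeed hh).lipschitzOnWith) (fun t => ⟨hθ t, trivial⟩)
    (fun t => ⟨hasDerivAt_kink hh t, trivial⟩) (h0.trans (kink_zero h₀).symm)

theorem stmt5 (h₀ : ℝ) (h : 0 < h₀) :
    (∃! θ : ℝ → ℝ, ContDiff ℝ 1 θ ∧ θ 0 = π ∧
      ∀ x, deriv θ x = Real.sqrt (sin (θ x) ^ 2 + 2 * h₀ * (1 - cos (θ x)))) ∧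
    (∀ θ : ℝ → ℝ, ContDiff ℝ 1 θ → θ 0 = π →
      (∀ x, deriv θ x = Real.sqrt (sin (θ x) ^ 2 + 2 * h₀ * (1 - cos (θ x)))) →
      (∀ x, 0 < θ x ∧ θ x < 2 * π) ∧ StrictMono θ ∧
        Tendsto θ atBot (nhds 0) ∧ Tendsto θ atTop (nhds (2 * π))) := by
  have unique : ∀ θ : ℝ → ℝ, ContDiff ℝ 1 θ → θ 0 = π →
      (∀ x, deriv θ x = kinkSpeed h₀ (θ x)) → θ = kink h₀ := fun θ hθ h0 hderiv =>
    eq_kink_of_hasDerivAt h.le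
      (fun x => hderiv x ▸ ((hθ.differentiable one_ne_zero) x).hasDerivAt) h0
  refine ⟨⟨kink h₀, ⟨contDiff_kink, kink_zero h₀, fun x => (hasDerivAt_kink h.le x).deriv⟩,
    fun θ hθ => unique θ hθ.1 hθ.2.1 hθ.2.2⟩, ?_⟩
  rintro θ hθ h0 hderiv
  obtain rfl := unique θ hθ h0 hderiv
  exact ⟨kink_mem_Ioo h₀, strictMono_kink h, tendsto_kink_atBot h, tendsto_kink_atTop h⟩
end

section
/- Let h₀ > 0 and θ_{h₀} the solution of θ' = √(sin²θ + 2h₀(1-cos θ)), θ(0) = π. Then for every ε ∈ (0, √(1+h₀)) there exists C > 0 such that θ_{h₀}(x) ≤ C e^{(√(1+h₀) - ε)x} for all x ≤ 0; in particular θ_{h₀}(x) → 0 exponentially as x → -∞. -/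
/-!
From `sin y ≥ y - y³/6` and `1 - cos y = 2 sin² (y/2)`, the right-hand side of the equation is
at least `√(1 + h₀) y (1 - y²/6)` for small `y > 0`. So once `θ` is small enough (which happens
on a half-line `x ≤ x₀`, since `θ → 0` at `-∞`) it satisfies `θ' ≥ k θ` with
`k = √(1 + h₀) - ε`. Then `θ x * exp (-k x)` is monotone on that half-line,
which gives `θ x ≤ θ x₀ exp (k (x - x₀))`; on `[x₀, 0]` the bound `θ < 2π` suffices.
-/

open Real Filter Topology

theorem one_sub_cos_eq_two_mul_sin_half_sq (y : ℝ) : 1 - cos y = 2 * sin (y / 2) ^ 2 := by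
  have h := cos_two_mul' (y / 2)
  rw [mul_div_cancel₀ y two_ne_zero, cos_sq'] at h
  linarith

theorem sqrt_one_add_mul_le_sqrt_sin_sq_add {h y : ℝ} (hh : 0 ≤ h) (hy : 0 < y) (hy2 : y ≤ 2) :
    √(1 + h) * (y * (1 - y ^ 2 / 6)) ≤ √(sin y ^ 2 + 2 * h * (1 - cos y)) := by
  set p := y * (1 - y ^ 2 / 6)
  have hp : 0 ≤ p := mul_nonneg hy.le (by nlinarith)
  have hsin : p ≤ sin y := by have := sin_gt_sub_cube hy; simp only [p]; linarith
  have hsin_half : p / 2 ≤ sin (y / 2) := by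
    have := sin_gt_sub_cube (half_pos hy); simp only [p]; nlinarith
  rw [← sqrt_sq hp, ← sqrt_mul (by linarith), one_sub_cos_eq_two_mul_sin_half_sq]
  apply sqrt_le_sqrt
  calc (1 + h) * p ^ 2 = p ^ 2 + 2 * h * (2 * (p / 2) ^ 2) := by ring
    _ ≤ sin y ^ 2 + 2 * h * (2 * sin (y / 2) ^ 2) := by gcongr

theorem eventually_mul_le_sqrt_sin_sq_add {h k : ℝ} (hh : 0 ≤ h) (hk : k < √(1 + h)) :
    ∀ᶠ y in 𝓝[>] 0, k * y ≤ √(sin y ^ 2 + 2 * h * (1 - cos y)) := by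
  have hlim : Tendsto (fun y : ℝ ↦ √(1 + h) * (1 - y ^ 2 / 6)) (𝓝 0) (𝓝 (√(1 + h))) := by
    have : Continuous fun y : ℝ ↦ √(1 + h) * (1 - y ^ 2 / 6) := by fun_prop
    simpa using this.tendsto 0
  have hk' : ∀ᶠ y in 𝓝 0, k < √(1 + h) * (1 - y ^ 2 / 6) := hlim.eventually (lt_mem_nhds hk)
  have hy2 : ∀ᶠ y in 𝓝 (0 : ℝ), y ≤ 2 := eventually_le_nhds two_pos
  filter_upwards [self_mem_nhdsWithin, nhdsWithin_le_nhds hk', nhdsWithin_le_nhds hy2]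
    with y (hy : 0 < y) hky hy2
  calc k * y ≤ √(1 + h) * (1 - y ^ 2 / 6) * y := by gcongr
    _ = √(1 + h) * (y * (1 - y ^ 2 / 6)) := by ring
    _ ≤ _ := sqrt_one_add_mul_le_sqrt_sin_sq_add hh hy hy2

theorem le_mul_exp_of_mul_le_deriv {f : ℝ → ℝ} {k x₀ x : ℝ} (hf : Differentiable ℝ f)
    (hderiv : ∀ y < x₀, k * f y ≤ deriv f y) (hx : x ≤ x₀) :
    f x ≤ f x₀ * exp (k * (x - x₀)) := by
  set g : ℝ → ℝ := fun y ↦ f y * exp (-k * y)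
  have hg : ∀ y, HasDerivAt g ((deriv f y - k * f y) * exp (-k * y)) y := by
    intro y
    have he : HasDerivAt (fun y ↦ exp (-k * y)) (exp (-k * y) * -k) y := by
      simpa using ((hasDerivAt_id y).const_mul (-k)).exp
    exact ((hf y).hasDerivAt.mul he).congr_deriv (by ring)
  have hmono : MonotoneOn g (Set.Iic x₀) := by
    refine monotoneOn_of_deriv_nonneg (convex_Iic x₀)
      (fun y _ ↦ (hg y).continuousAt.continuousWithinAt)
      (fun y _ ↦ (hg y).differentiableAt.differentiableWithinAt) fun y hy ↦ ?_
    rw [interior_Iic] at hy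
    rw [(hg y).deriv]
    exact mul_nonneg (sub_nonneg.2 (hderiv y hy)) (exp_pos _).le
  have hgx : g x ≤ g x₀ := hmono hx (Set.mem_Iic.2 le_rfl) hx
  calc f x = g x * exp (k * x) := by rw [mul_assoc, ← exp_add]; simp
    _ ≤ g x₀ * exp (k * x) := by gcongr
    _ = f x₀ * exp (k * (x - x₀)) := by rw [mul_assoc, ← exp_add]; congr 2; ring

theorem exists_pos_forall_le_mul_exp {f : ℝ → ℝ} {k M x₀ : ℝ} (hk : 0 ≤ k) (hM : 0 < M)
    (hbound : ∀ x, f x ≤ M) (hdecay : ∀ x ≤ x₀, f x ≤ M * exp (k * (x - x₀))) :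
    ∃ C > 0, ∀ x, f x ≤ C * exp (k * x) := by
  refine ⟨M * exp (-k * x₀), by positivity, fun x ↦ ?_⟩
  have hC : M * exp (-k * x₀) * exp (k * x) = M * exp (k * (x - x₀)) := by
    rw [mul_assoc, ← exp_add]; congr 2; ring
  rw [hC]
  rcases le_total x x₀ with hx | hx
  · exact hdecay x hx
  · calc f x ≤ M := hbound x
      _ ≤ M * exp (k * (x - x₀)) :=
        le_mul_of_one_le_right hM.le (one_le_exp (mul_nonneg hk (sub_nonneg.2 hx)))

theorem stmt7_general (h₀ : ℝ) (h : 0 < h₀) (θ : ℝ → ℝ) (hθ : ContDiff ℝ 1 θ)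
    (hODE : ∀ x, deriv θ x = Real.sqrt (sin (θ x) ^ 2 + 2 * h₀ * (1 - cos (θ x))))
    (hrange : ∀ x, 0 < θ x ∧ θ x < 2 * π)
    (hlim : Tendsto θ atBot (nhds 0)) :
    ∀ ε ∈ Set.Ioo 0 (Real.sqrt (1 + h₀)), ∃ C > (0:ℝ), ∀ x ≤ (0:ℝ),
      θ x ≤ C * Real.exp ((Real.sqrt (1 + h₀) - ε) * x) := by
  rintro ε ⟨hε, hεs⟩
  have hθ0 : Tendsto θ atBot (𝓝[>] 0) :=
    tendsto_nhdsWithin_iff.2 ⟨hlim, .of_forall fun x ↦ (hrange x).1⟩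
  have hgrowth : ∀ᶠ x in atBot, (√(1 + h₀) - ε) * θ x ≤ deriv θ x := by
    have hk : √(1 + h₀) - ε < √(1 + h₀) := by linarith
    filter_upwards [hθ0.eventually (eventually_mul_le_sqrt_sin_sq_add h.le hk)] with x hx
    rwa [hODE]
  obtain ⟨x₀, hx₀⟩ := eventually_atBot.1 hgrowth
  have hdecay : ∀ x ≤ x₀, θ x ≤ 2 * π * exp ((√(1 + h₀) - ε) * (x - x₀)) := fun x hx ↦
    (le_mul_exp_of_mul_le_deriv (hθ.differentiable one_ne_zero) (fun y hy ↦ hx₀ y hy.le) hx).trans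
      (mul_le_mul_of_nonneg_right (hrange x₀).2.le (exp_pos _).le)
  obtain ⟨C, hC, hle⟩ := exists_pos_forall_le_mul_exp (by linarith) two_pi_pos
    (fun x ↦ (hrange x).2.le) hdecay
  exact ⟨C, hC, fun x _ ↦ hle x⟩

theorem stmt7 (h₀ : ℝ) (h : 0 < h₀) (θ : ℝ → ℝ) (hθ : ContDiff ℝ 1 θ) (h0 : θ 0 = π)
    (hODE : ∀ x, deriv θ x = Real.sqrt (sin (θ x) ^ 2 + 2 * h₀ * (1 - cos (θ x))))
    (hrange : ∀ x, 0 < θ x ∧ θ x < 2 * π) (hmono : StrictMono θ)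
    (hlim : Tendsto θ atBot (nhds 0)) :
    ∀ ε ∈ Set.Ioo 0 (Real.sqrt (1 + h₀)), ∃ C > (0:ℝ), ∀ x ≤ (0:ℝ),
      θ x ≤ C * Real.exp ((Real.sqrt (1 + h₀) - ε) * x) :=
  stmt7_general h₀ h θ hθ hODE hrange hlim
end

section
/- Let θ : ℝ → ℝ be smooth with (θ')² = sin²θ + 2h₀(1 - cos θ) and -θ'' + sin θ cos θ + h₀ sin θ = 0, and set w = (cos θ, sin θ, 0) : ℝ → 𝕊². Then -w'' + w₂e₂ - h₀e₁ = -Λ w pointwise, where Λ(x) = -2sin²θ(x) + 3h₀cos θ(x) - 2h₀; equivalently H(w) = Λ w with H(m) = ∂ₓₓm - m₂e₂ - m₃e₃ + h₀e₁. -/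
open Real

/-- Componentwise formulation of `H(w) = Λ w` for `w = (cos θ, sin θ, 0)`,
where `H(m) = ∂ₓₓ m - m₂ e₂ - m₃ e₃ + h₀ e₁` and
`Λ(x) = -2 sin²θ + 3 h₀ cos θ - 2 h₀`. -/
theorem stmt10 (h₀ : ℝ) (θ : ℝ → ℝ) (hθ : ContDiff ℝ (⊤ : ℕ∞) θ)
    (hODE : ∀ x, -(deriv (deriv θ) x) + sin (θ x) * cos (θ x) + h₀ * sin (θ x) = 0)
    (hfi : ∀ x, (deriv θ x) ^ 2 = sin (θ x) ^ 2 + 2 * h₀ * (1 - cos (θ x))) :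
    ∀ x,
      deriv (deriv (fun y => cos (θ y))) x + h₀
        = (-2 * sin (θ x) ^ 2 + 3 * h₀ * cos (θ x) - 2 * h₀) * cos (θ x) ∧
      deriv (deriv (fun y => sin (θ y))) x - sin (θ x)
        = (-2 * sin (θ x) ^ 2 + 3 * h₀ * cos (θ x) - 2 * h₀) * sin (θ x) ∧
      (0:ℝ) = (-2 * sin (θ x) ^ 2 + 3 * h₀ * cos (θ x) - 2 * h₀) * 0 := by
  have hθ' := (contDiff_infty_iff_deriv.mp (hθ.of_le (by simp))).2
  have hd : ∀ y, HasDerivAt θ (deriv θ y) y :=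
    fun y => (hθ.differentiable (by simp) y).hasDerivAt
  have hd' : ∀ y, HasDerivAt (deriv θ) (deriv (deriv θ) y) y :=
    fun y => (hθ'.differentiable (by simp) y).hasDerivAt
  have hcos : deriv (fun y => cos (θ y)) = fun y => -sin (θ y) * deriv θ y := by
    funext y
    exact ((Real.hasDerivAt_cos (θ y)).comp y (hd y)).deriv
  have hsin : deriv (fun y => sin (θ y)) = fun y => cos (θ y) * deriv θ y := by
    funext y
    exact ((Real.hasDerivAt_sin (θ y)).comp y (hd y)).deriv
  intro x
  have hc2 : deriv (deriv (fun y => cos (θ y))) x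
      = -cos (θ x) * deriv θ x * deriv θ x + -sin (θ x) * deriv (deriv θ) x := by
    rw [hcos]
    have h1 : HasDerivAt (fun y => -sin (θ y)) (-(cos (θ x) * deriv θ x)) x := by
      have := ((Real.hasDerivAt_sin (θ x)).comp x (hd x)).neg
      exact this
    have := h1.mul (hd' x)
    have := this.deriv
    rw [show (fun y => -sin (θ y) * deriv θ y) = (fun y => -sin (θ y)) * deriv θ from rfl, this]; try ring
  have hs2 : deriv (deriv (fun y => sin (θ y))) x
      = -sin (θ x) * deriv θ x * deriv θ x + cos (θ x) * deriv (deriv θ) x := by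
    rw [hsin]
    have h1 : HasDerivAt (fun y => cos (θ y)) (-sin (θ x) * deriv θ x) x :=
      (Real.hasDerivAt_cos (θ x)).comp x (hd x)
    have := (h1.mul (hd' x)).deriv
    rw [show (fun y => cos (θ y) * deriv θ y) = (fun y => cos (θ y)) * deriv θ from rfl, this]; try ring
  have hode := hODE x
  have hfix := hfi x
  have hpy := sin_sq_add_cos_sq (θ x)
  have hD : deriv θ x * deriv θ x = sin (θ x) ^ 2 + 2 * h₀ * (1 - cos (θ x)) := by
    nlinarith [hfix]
  refine ⟨?_, ?_, by ring⟩
  · rw [hc2]; linear_combination (-cos (θ x)) * hD + sin (θ x) * hode - h₀ * hpy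
  · rw [hs2]; linear_combination (-sin (θ x)) * hD - cos (θ x) * hode + sin (θ x) * hpy
end
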